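/- Let λ, μ : Fin (n+1) → ℤ and suppose both are far from the walls, in the sense that for all i ≠ j one has 2·|(λ+ρ)(i) − (λ+ρ)(j)| > n and 2·|(μ+ρ)(i) − (μ+ρ)(j)| > n, and suppose moreover that λ + μ + ρ is injective. Then l(λ+μ) = l(λ) + l(μ) if and only if Φ_{λ+μ} = Φ_λ ⊔ Φ_μ (that is, Φ_λ ∩ Φ_μ = ∅ and Φ_λ ∪ Φ_μ = Φ_{λ+μ}). -/

import Mathlib

/-!
For `i < j` the difference `(λ+μ+ρ)(i) - (λ+μ+ρ)(j)` is the sum of the corresponding differences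
for `λ + ρ` and `μ + ρ`, minus `ρ(i) - ρ(j) = j - i ≤ n`. Far from the walls each of those two
differences exceeds `n / 2` in absolute value, so if `(i, j)` lies in neither `Φ_λ` nor `Φ_μ`,
the difference for `λ + μ + ρ` is positive: `Φ_{λ+μ} ⊆ Φ_λ ∪ Φ_μ`. Given that inclusion,
`#Φ_{λ+μ} = #Φ_λ + #Φ_μ` holds exactly when the union is disjoint and equal to `Φ_{λ+μ}`.
-/

open Finset

/-- `ρ(i) = n - i` for `i : Fin (n+1)`. -/
def rho (n : ℕ) : Fin (n + 1) → ℤ := fun i => (n : ℤ) - (i : ℤ)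

/-- `Φ_λ`: pairs `(i,j)` with `i < j` and `(λ+ρ)(i) < (λ+ρ)(j)`. -/
def Phi (n : ℕ) (l : Fin (n + 1) → ℤ) : Finset (Fin (n + 1) × Fin (n + 1)) :=
  Finset.univ.filter fun p => p.1 < p.2 ∧ l p.1 + rho n p.1 < l p.2 + rho n p.2

theorem Finset.card_eq_card_add_card_iff_of_subset_union {α : Type*} [DecidableEq α]
    {s t u : Finset α} (h : u ⊆ s ∪ t) :
    #u = #s + #t ↔ Disjoint s t ∧ s ∪ t = u := by
  constructor
  · intro hcard
    have hunion : s ∪ t = u :=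
      (eq_of_subset_of_card_le h (hcard ▸ card_union_le s t)).symm
    exact ⟨card_union_eq_card_add_card.mp (hunion ▸ hcard), hunion⟩
  · rintro ⟨hdisj, rfl⟩
    exact card_union_of_disjoint hdisj

def FarFromWalls (n : ℕ) (l : Fin (n + 1) → ℤ) : Prop :=
  ∀ i j : Fin (n + 1), i ≠ j → 2 * |(l i + rho n i) - (l j + rho n j)| > (n : ℤ)

lemma rho_sub_rho_le (n : ℕ) (i j : Fin (n + 1)) : rho n i - rho n j ≤ n := by
  simp only [rho]
  omega

lemma mem_Phi {n : ℕ} {l : Fin (n + 1) → ℤ} {p : Fin (n + 1) × Fin (n + 1)} :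
    p ∈ Phi n l ↔ p.1 < p.2 ∧ l p.1 + rho n p.1 < l p.2 + rho n p.2 := by
  simp [Phi]

lemma Phi_add_subset_union {n : ℕ} {lam mu : Fin (n + 1) → ℤ}
    (hlam : FarFromWalls n lam) (hmu : FarFromWalls n mu) :
    Phi n (lam + mu) ⊆ Phi n lam ∪ Phi n mu := by
  rintro ⟨i, j⟩ hij
  simp only [mem_union, mem_Phi, Pi.add_apply] at hij ⊢
  obtain ⟨hlt, hinv⟩ := hij
  by_contra! hnot
  have hlam_ij := hlam i j hlt.ne
  have hmu_ij := hmu i j hlt.ne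
  rw [abs_of_nonneg (sub_nonneg.mpr (hnot.1 hlt))] at hlam_ij
  rw [abs_of_nonneg (sub_nonneg.mpr (hnot.2 hlt))] at hmu_ij
  linarith [rho_sub_rho_le n i j]

theorem stmt_6_general (n : ℕ) (lam mu : Fin (n + 1) → ℤ)
    (hlam : ∀ i j : Fin (n + 1), i ≠ j →
      2 * |(lam i + rho n i) - (lam j + rho n j)| > (n : ℤ))
    (hmu : ∀ i j : Fin (n + 1), i ≠ j →
      2 * |(mu i + rho n i) - (mu j + rho n j)| > (n : ℤ)) :
    (Phi n (lam + mu)).card = (Phi n lam).card + (Phi n mu).card ↔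
      (Disjoint (Phi n lam) (Phi n mu) ∧ Phi n lam ∪ Phi n mu = Phi n (lam + mu)) :=
  card_eq_card_add_card_iff_of_subset_union (Phi_add_subset_union hlam hmu)

theorem stmt_6 (n : ℕ) (lam mu : Fin (n + 1) → ℤ)
    (hlam : ∀ i j : Fin (n + 1), i ≠ j →
      2 * |(lam i + rho n i) - (lam j + rho n j)| > (n : ℤ))
    (hmu : ∀ i j : Fin (n + 1), i ≠ j →
      2 * |(mu i + rho n i) - (mu j + rho n j)| > (n : ℤ))
    (hreg : Function.Injective fun i => lam i + mu i + rho n i) :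
    (Phi n (lam + mu)).card = (Phi n lam).card + (Phi n mu).card ↔
      (Disjoint (Phi n lam) (Phi n mu) ∧ Phi n lam ∪ Phi n mu = Phi n (lam + mu)) :=
  stmt_6_general n lam mu hlam hmu
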